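/- One-dimensional Gaussian mechanism is (ε, δ)-indistinguishable (per-round (ε, δ)-differential privacy of Theorem 2, measure form): Let 0 < ε ≤ 1, 0 < δ < 1, S > 0, and set σ = (S/ε)·√(2·log(1.25/δ)). Let μ₀, μ₁ ∈ ℝ with |μ₀ − μ₁| ≤ S. Then for every measurable set A ⊆ ℝ, (gaussianReal μ₀ σ²)(A) ≤ exp(ε) · (gaussianReal μ₁ σ²)(A) + δ. -/

import Mathlib

open Real MeasureTheory Set ProbabilityTheory

lemma integral_Ioi_translate (b : ℝ) (g : ℝ → ℝ) :
    ∫ x in Ioi b, g (x - b) = ∫ x in Ioi 0, g x := by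
  have h := (measurePreserving_add_right volume b).setIntegral_preimage_emb
      (MeasurableEquiv.addRight b).measurableEmbedding (fun y => g (y - b)) (Ioi b)
  have hpre : (fun x => x + b) ⁻¹' Ioi b = Ioi 0 := by
    ext x; simp [Set.mem_Ioi]
  rw [hpre] at h
  rw [← h]
  simp

lemma integral_Iio_reflect (b : ℝ) (g : ℝ → ℝ) :
    ∫ x in Iio b, g (-x) = ∫ x in Ioi (-b), g x := by
  have h := (Measure.measurePreserving_neg (volume : Measure ℝ)).setIntegral_preimage_emb
      (MeasurableEquiv.neg ℝ).measurableEmbedding g (Ioi (-b))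
  have hpre : (Neg.neg : ℝ → ℝ) ⁻¹' Ioi (-b) = Iio b := by
    ext x; simp [Set.mem_Ioi]
  rw [hpre] at h
  exact h


open NNReal in
lemma coe_toNNReal_sq (σ : ℝ) : (((σ^2).toNNReal : ℝ≥0) : ℝ) = σ^2 :=
  Real.coe_toNNReal _ (sq_nonneg σ)

lemma integral_pdf_Ioi_mean (σ : ℝ) (hσ : 0 < σ) (b : ℝ) :
    ∫ x in Ioi b, gaussianPDFReal b (σ^2).toNNReal x = 1/2 := by
  have hV := coe_toNNReal_sq σ
  have hsq : Real.sqrt (2 * π * σ^2) ≠ 0 := by positivity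
  have hpdf : ∀ x : ℝ, gaussianPDFReal b (σ^2).toNNReal x
      = (fun y => (Real.sqrt (2 * π * σ^2))⁻¹ * rexp (-(1/(2*σ^2)) * y^2)) (x - b) := by
    intro x
    simp only [gaussianPDFReal, hV]
    congr 1
    field_simp
  rw [setIntegral_congr_fun measurableSet_Ioi (fun x _ => hpdf x),
    integral_Ioi_translate b (fun y => (Real.sqrt (2 * π * σ^2))⁻¹ * rexp (-(1/(2*σ^2)) * y^2)),
    integral_const_mul, integral_gaussian_Ioi,
    show π / (1/(2*σ^2)) = 2 * π * σ^2 by field_simp]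
  field_simp

lemma gauss_tail_le (σ : ℝ) (hσ : 0 < σ) (μ u : ℝ) (hu : 0 ≤ u) :
    gaussianReal μ (σ^2).toNNReal (Ioi (μ + σ * u)) ≤
      ENNReal.ofReal (rexp (-u^2/2) * (1/2)) := by
  have hV := coe_toNNReal_sq σ
  have hVne : (σ^2).toNNReal ≠ 0 := by
    simp only [ne_eq, Real.toNNReal_eq_zero, not_le]; positivity
  rw [gaussianReal_apply_eq_integral _ hVne]
  apply ENNReal.ofReal_le_ofReal
  set b := μ + σ * u with hb
  have hpt : ∀ x ∈ Ioi b, gaussianPDFReal μ (σ^2).toNNReal x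
      ≤ rexp (-u^2/2) * gaussianPDFReal b (σ^2).toNNReal x := by
    intro x hx
    have hxb : b ≤ x := le_of_lt hx
    have key : -(x-μ)^2/(2*σ^2) ≤ -u^2/2 + -(x-b)^2/(2*σ^2) := by
      have expand : x - μ = (x - b) + σ*u := by rw [hb]; ring
      have heq : -(x-μ)^2/(2*σ^2)
          = -u^2/2 + -(x-b)^2/(2*σ^2) - σ*u*(x-b)/(σ^2) := by
        rw [expand]; field_simp; ring
      have hnn : 0 ≤ σ*u*(x-b)/(σ^2) :=
        div_nonneg (mul_nonneg (mul_nonneg hσ.le hu) (sub_nonneg.mpr hxb)) (sq_nonneg σ)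
      linarith
    simp only [gaussianPDFReal, hV]
    calc (Real.sqrt (2*π*σ^2))⁻¹ * rexp (-(x-μ)^2/(2*σ^2))
        ≤ (Real.sqrt (2*π*σ^2))⁻¹ * rexp (-u^2/2 + -(x-b)^2/(2*σ^2)) :=
          mul_le_mul_of_nonneg_left (Real.exp_le_exp.mpr key) (by positivity)
      _ = rexp (-u^2/2) * ((Real.sqrt (2*π*σ^2))⁻¹ * rexp (-(x-b)^2/(2*σ^2))) := by
          rw [Real.exp_add]; ring
  calc ∫ x in Ioi b, gaussianPDFReal μ (σ^2).toNNReal x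
      ≤ ∫ x in Ioi b, rexp (-u^2/2) * gaussianPDFReal b (σ^2).toNNReal x :=
        setIntegral_mono_on ((integrable_gaussianPDFReal _ _).restrict)
          (((integrable_gaussianPDFReal _ _).restrict).const_mul _) measurableSet_Ioi hpt
    _ = rexp (-u^2/2) * (1/2) := by
        rw [integral_const_mul, integral_pdf_Ioi_mean σ hσ]

lemma gauss_Ioc_le (σ : ℝ) (hσ : 0 < σ) (μ a b : ℝ) :
    gaussianReal μ (σ^2).toNNReal (Ioc a b) ≤
      ENNReal.ofReal ((b - a) * (Real.sqrt (2*π*σ^2))⁻¹) := by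
  have hV := coe_toNNReal_sq σ
  have hVne : (σ^2).toNNReal ≠ 0 := by
    simp only [ne_eq, Real.toNNReal_eq_zero, not_le]; positivity
  rw [gaussianReal_apply _ hVne]
  have hpt : ∀ x ∈ Ioc a b, gaussianPDF μ (σ^2).toNNReal x
      ≤ ENNReal.ofReal ((Real.sqrt (2*π*σ^2))⁻¹) := by
    intro x _
    apply ENNReal.ofReal_le_ofReal
    simp only [gaussianPDFReal, hV]
    calc (Real.sqrt (2*π*σ^2))⁻¹ * rexp (-(x-μ)^2/(2*σ^2))
        ≤ (Real.sqrt (2*π*σ^2))⁻¹ * 1 := by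
          apply mul_le_mul_of_nonneg_left _ (by positivity)
          rw [Real.exp_le_one_iff]
          apply div_nonpos_of_nonpos_of_nonneg (by nlinarith [sq_nonneg (x-μ)]) (by positivity)
      _ = (Real.sqrt (2*π*σ^2))⁻¹ := mul_one _
  calc ∫⁻ x in Ioc a b, gaussianPDF μ (σ^2).toNNReal x
      ≤ ∫⁻ _ in Ioc a b, ENNReal.ofReal ((Real.sqrt (2*π*σ^2))⁻¹) :=
        setLIntegral_mono measurable_const hpt
    _ = ENNReal.ofReal ((Real.sqrt (2*π*σ^2))⁻¹) * volume (Ioc a b) := setLIntegral_const _ _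
    _ ≤ ENNReal.ofReal ((b - a) * (Real.sqrt (2*π*σ^2))⁻¹) := by
        rw [Real.volume_Ioc, ← ENNReal.ofReal_mul (by positivity), mul_comm]

lemma gauss_Iio_eq (σ : ℝ) (hσ : 0 < σ) (μ b : ℝ) :
    gaussianReal μ (σ^2).toNNReal (Iio b) = gaussianReal (-μ) (σ^2).toNNReal (Ioi (-b)) := by
  have hVne : (σ^2).toNNReal ≠ 0 := by
    simp only [ne_eq, Real.toNNReal_eq_zero, not_le]; positivity
  rw [gaussianReal_apply_eq_integral _ hVne, gaussianReal_apply_eq_integral _ hVne]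
  congr 1
  rw [← integral_Iio_reflect b (gaussianPDFReal (-μ) (σ^2).toNNReal)]
  apply setIntegral_congr_fun measurableSet_Iio
  intro x _
  simp only [gaussianPDFReal]
  congr 2
  ring

lemma exp_half_le : rexp (1/2) ≤ 2.5 := by
  have h : rexp (1/2) * rexp (1/2) = rexp 1 := by rw [← Real.exp_add]; norm_num
  nlinarith [Real.exp_pos (1/2 : ℝ), Real.exp_one_lt_d9]

lemma numeric1 (ε δ L : ℝ) (hε0 : 0 < ε) (hε1 : ε ≤ 1) (hδ0 : 0 < δ)
    (hL : 0.05 ≤ L) (hLδ : rexp L * δ = 1.25) :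
    rexp (-(Real.sqrt (2*L) - ε/(2*Real.sqrt (2*L)))^2/2) * (1/2) ≤ δ := by
  set s := Real.sqrt (2*L) with hs
  have hs0 : 0 < s := Real.sqrt_pos.mpr (by linarith)
  have hs2 : s^2 = 2*L := Real.sq_sqrt (by linarith)
  have hu2 : 2*L - ε ≤ (s - ε/(2*s))^2 := by
    have hexp : (s - ε/(2*s))^2 = s^2 - ε + (ε/(2*s))^2 := by field_simp; ring
    nlinarith [sq_nonneg (ε/(2*s))]
  have h1 : rexp (-(s - ε/(2*s))^2/2) ≤ rexp (-L) * rexp (1/2) := by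
    rw [← Real.exp_add]
    exact Real.exp_le_exp.mpr (by linarith)
  have hexpL : rexp (-L) * rexp L = 1 := by rw [← Real.exp_add]; norm_num
  nlinarith [Real.exp_pos (-L), Real.exp_pos L, exp_half_le,
    mul_le_mul_of_nonneg_right h1 (le_of_lt (by positivity : (0:ℝ) < rexp L)),
    Real.exp_pos (-(s - ε/(2*s))^2/2)]

lemma numeric2 (ε δ L : ℝ) (hε0 : 0 < ε) (hε1 : ε ≤ 1) (hδ0 : 0 < δ)
    (hL : 0.05 ≤ L) (hLδ : rexp L * δ = 1.25)
    (hu : Real.sqrt (2*L) - ε/(2*Real.sqrt (2*L)) < 0) :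
    (ε/(2*Real.sqrt (2*L)) - Real.sqrt (2*L)) * (Real.sqrt (2*π))⁻¹ + 1/2 ≤ δ := by
  set s := Real.sqrt (2*L) with hs
  have hs0 : 0 < s := Real.sqrt_pos.mpr (by linarith)
  have hs2 : s^2 = 2*L := Real.sq_sqrt (by linarith)
  have hsε : 2*s^2 < ε := by
    have := sub_neg.mp hu
    calc 2*s^2 = (2*s)*s := by ring
      _ < (2*s)*(ε/(2*s)) := by apply mul_lt_mul_of_pos_left this (by positivity)
      _ = ε := by field_simp
  have hs3 : 0.3 ≤ s := by nlinarith
  have hs1 : s^2 ≤ 1 := by nlinarith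
  have hw : 2.5 ≤ Real.sqrt (2*π) := by
    have h2 : Real.sqrt (2*π)^2 = 2*π := Real.sq_sqrt (by positivity)
    nlinarith [Real.pi_gt_d6, Real.sqrt_nonneg (2*π)]
  have hX0 : 0 < ε/(2*s) - s := by linarith
  have hXle : ε/(2*s) - s ≤ (1 - 2*s^2)/(2*s) := by
    rw [show ε/(2*s) - s = (ε - 2*s^2)/(2*s) by field_simp]
    exact (div_le_div_iff_of_pos_right (by positivity)).mpr (by linarith)
  have hXw : (ε/(2*s) - s) * (Real.sqrt (2*π))⁻¹ ≤ (ε/(2*s) - s) / 2.5 := by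
    rw [div_eq_mul_inv]
    apply mul_le_mul_of_nonneg_left _ hX0.le
    apply inv_anti₀ (by norm_num) hw
  have hδL : (1 - L) * 1.25 ≤ δ := by
    have h2 : 1 - L ≤ rexp (-L) := by nlinarith [Real.add_one_le_exp (-L)]
    have h3 : rexp (-L) * rexp L = 1 := by rw [← Real.exp_add]; norm_num
    nlinarith [Real.exp_pos L, mul_le_mul_of_nonneg_right h2
      (le_of_lt (by positivity : (0:ℝ) < rexp L * δ))]
  have hpoly : (1 - 2*s^2)/(2*s) / 2.5 + 1/2 ≤ (1 - s^2/2) * 1.25 := by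
    rw [div_div, div_add' _ _ _ (by positivity), div_le_iff₀ (by positivity)]
    nlinarith [mul_nonneg (sub_nonneg.mpr hs3) (sub_nonneg.mpr hs1),
      sq_nonneg (s - 0.3), sq_nonneg (s - 1), mul_pos hs0 hs0]
  have hL2 : L = s^2/2 := by linarith
  calc (ε/(2*s) - s) * (Real.sqrt (2*π))⁻¹ + 1/2
      ≤ (1 - 2*s^2)/(2*s) / 2.5 + 1/2 := add_le_add_left (le_trans hXw ((div_le_div_iff_of_pos_right (by norm_num)).mpr hXle)) _
    _ ≤ (1 - s^2/2) * 1.25 := hpoly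
    _ = (1 - L) * 1.25 := by rw [hL2]
    _ ≤ δ := hδL

lemma tail_main (ε δ L σ μ t : ℝ) (hε0 : 0 < ε) (hε1 : ε ≤ 1) (hδ0 : 0 < δ)
    (hL : 0.05 ≤ L) (hLδ : rexp L * δ = 1.25) (hσ : 0 < σ)
    (ht : Real.sqrt (2*L) - ε/(2*Real.sqrt (2*L)) ≤ t) :
    gaussianReal μ (σ^2).toNNReal (Ioi (μ + σ * t)) ≤ ENNReal.ofReal δ := by
  set s := Real.sqrt (2*L) with hs
  have hs0 : 0 < s := Real.sqrt_pos.mpr (by linarith)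
  set u := s - ε/(2*s) with hu
  have hsub : Ioi (μ + σ*t) ⊆ Ioi (μ + σ*u) := Ioi_subset_Ioi (by nlinarith)
  refine le_trans (measure_mono hsub) ?_
  rcases le_or_gt 0 u with h0 | h0
  · refine le_trans (gauss_tail_le σ hσ μ u h0) (ENNReal.ofReal_le_ofReal ?_)
    exact numeric1 ε δ L hε0 hε1 hδ0 hL hLδ
  · have hsplit : Ioi (μ + σ*u) ⊆ Ioc (μ + σ*u) μ ∪ Ioi μ := by
      intro x hx
      rcases le_or_gt x μ with h | h
      · exact Or.inl ⟨hx, h⟩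
      · exact Or.inr h
    refine le_trans (measure_mono hsplit) (le_trans (measure_union_le _ _) ?_)
    have h1 := gauss_Ioc_le σ hσ μ (μ + σ*u) μ
    have h2 : gaussianReal μ (σ^2).toNNReal (Ioi μ) ≤ ENNReal.ofReal (1/2) := by
      have h := gauss_tail_le σ hσ μ 0 le_rfl
      norm_num at h
      simpa using h
    refine le_trans (add_le_add h1 h2) ?_
    have hsqrt : Real.sqrt (2*π*σ^2) = σ * Real.sqrt (2*π) := by
      rw [mul_comm (2*π) (σ^2), Real.sqrt_mul (sq_nonneg σ), Real.sqrt_sq hσ.le]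
    have hterm : (μ - (μ + σ*u)) * (Real.sqrt (2*π*σ^2))⁻¹
        = (ε/(2*s) - s) * (Real.sqrt (2*π))⁻¹ := by
      rw [hsqrt, mul_inv]
      have : μ - (μ + σ*u) = σ * (-u) := by ring
      rw [this, hu]
      field_simp
      ring
    have hnn : 0 ≤ (μ - (μ + σ*u)) * (Real.sqrt (2*π*σ^2))⁻¹ := by
      rw [hterm]
      have hX0 : 0 < ε/(2*s) - s := by rw [hu] at h0; linarith
      positivity
    rw [← ENNReal.ofReal_add hnn (by norm_num)]
    apply ENNReal.ofReal_le_ofReal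
    rw [hterm]
    exact numeric2 ε δ L hε0 hε1 hδ0 hL hLδ (by rw [← hu]; exact h0)

set_option maxHeartbeats 1000000 in
/-- One-dimensional Gaussian mechanism is `(ε, δ)`-indistinguishable: with
`σ = (S/ε) √(2 log (1.25/δ))` and `|μ₀ - μ₁| ≤ S`, for every measurable `A ⊆ ℝ`,
`gaussianReal μ₀ σ² A ≤ exp ε * gaussianReal μ₁ σ² A + δ`. -/
theorem gaussian_mechanism_indistinguishable (ε δ S : ℝ)
    (hε0 : 0 < ε) (hε1 : ε ≤ 1) (hδ0 : 0 < δ) (hδ1 : δ < 1) (hS : 0 < S)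
    (σ : ℝ) (hσ : σ = (S / ε) * Real.sqrt (2 * Real.log (1.25 / δ)))
    (μ₀ μ₁ : ℝ) (hμ : |μ₀ - μ₁| ≤ S) :
    ∀ A : Set ℝ, MeasurableSet A →
      gaussianReal μ₀ (σ ^ 2).toNNReal A ≤
        ENNReal.ofReal (Real.exp ε) * gaussianReal μ₁ (σ ^ 2).toNNReal A +
          ENNReal.ofReal δ := by
  intro A hA
  set L := Real.log (1.25 / δ) with hLdef
  have hexpL : rexp L * δ = 1.25 := by
    rw [hLdef, Real.exp_log (by positivity)]
    field_simp
  have hL05 : 0.05 ≤ L := by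
    have h1 : (1.25 : ℝ) ≤ 1.25/δ := by rw [le_div_iff₀ hδ0]; nlinarith
    have h2 : Real.log 1.25 ≤ L := by rw [hLdef]; exact Real.log_le_log (by norm_num) h1
    have h3 : (0.05:ℝ) ≤ Real.log 1.25 := by
      rw [Real.le_log_iff_exp_le (by norm_num)]
      have h4 : rexp (0.05) * rexp (-0.05) = 1 := by rw [← Real.exp_add]; norm_num
      nlinarith [Real.add_one_le_exp (-(0.05:ℝ)), Real.exp_pos (0.05:ℝ)]
    linarith
  have hs0 : 0 < Real.sqrt (2*L) := Real.sqrt_pos.mpr (by linarith)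
  have hσ0 : 0 < σ := by rw [hσ]; exact mul_pos (div_pos hS hε0) hs0
  have hV := coe_toNNReal_sq σ
  have hVne : (σ^2).toNNReal ≠ 0 := by
    simp only [ne_eq, Real.toNNReal_eq_zero, not_le]; positivity
  by_cases hΔ0 : μ₀ = μ₁
  · subst hΔ0
    calc gaussianReal μ₀ (σ^2).toNNReal A
        = 1 * gaussianReal μ₀ (σ^2).toNNReal A := (one_mul _).symm
      _ ≤ ENNReal.ofReal (rexp ε) * gaussianReal μ₀ (σ^2).toNNReal A :=
          mul_le_mul_left (by rw [ENNReal.one_le_ofReal]; exact Real.one_le_exp hε0.le) _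
      _ ≤ _ := le_self_add
  · set Δ := μ₀ - μ₁ with hΔdef
    have hΔ : Δ ≠ 0 := sub_ne_zero.mpr hΔ0
    set B : Set ℝ := {x | 2*σ^2*ε < Δ * (2*x - μ₀ - μ₁)} with hBdef
    have hstep1 : gaussianReal μ₀ (σ^2).toNNReal A
        ≤ gaussianReal μ₀ (σ^2).toNNReal (A ∩ Bᶜ) + gaussianReal μ₀ (σ^2).toNNReal B := by
      refine le_trans (measure_mono (fun x hx => ?_)) (measure_union_le _ _)
      by_cases hxB : x ∈ B
      · exact Or.inr hxB
      · exact Or.inl ⟨hx, hxB⟩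
    have hstep2 : gaussianReal μ₀ (σ^2).toNNReal (A ∩ Bᶜ)
        ≤ ENNReal.ofReal (rexp ε) * gaussianReal μ₁ (σ^2).toNNReal A := by
      rw [gaussianReal_apply _ hVne, gaussianReal_apply _ hVne]
      calc ∫⁻ x in A ∩ Bᶜ, gaussianPDF μ₀ (σ^2).toNNReal x
          ≤ ∫⁻ x in A ∩ Bᶜ, ENNReal.ofReal (rexp ε) * gaussianPDF μ₁ (σ^2).toNNReal x := by
            apply setLIntegral_mono (measurable_const.mul (measurable_gaussianPDF _ _))
            intro x hx
            have hxB : ¬ (2*σ^2*ε < Δ * (2*x - μ₀ - μ₁)) := hx.2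
            push_neg at hxB
            unfold gaussianPDF
            simp only [Pi.mul_apply]
            rw [← ENNReal.ofReal_mul (by positivity)]
            apply ENNReal.ofReal_le_ofReal
            simp only [gaussianPDFReal, hV]
            rw [show rexp ε * ((Real.sqrt (2*π*σ^2))⁻¹ * rexp (-(x-μ₁)^2/(2*σ^2)))
                = (Real.sqrt (2*π*σ^2))⁻¹ * rexp (ε + -(x-μ₁)^2/(2*σ^2)) by
              rw [Real.exp_add]; ring]
            apply mul_le_mul_of_nonneg_left _ (by positivity)
            apply Real.exp_le_exp.mpr
            have hid : (x-μ₁)^2 - (x-μ₀)^2 = Δ * (2*x - μ₀ - μ₁) := by rw [hΔdef]; ring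
            rw [← sub_nonneg, show ε + -(x-μ₁)^2/(2*σ^2) - -(x-μ₀)^2/(2*σ^2)
                = (2*σ^2*ε - ((x-μ₁)^2 - (x-μ₀)^2))/(2*σ^2) by field_simp; ring]
            apply div_nonneg _ (by positivity)
            rw [hid]
            linarith
        _ = ENNReal.ofReal (rexp ε) * ∫⁻ x in A ∩ Bᶜ, gaussianPDF μ₁ (σ^2).toNNReal x :=
            lintegral_const_mul _ (measurable_gaussianPDF _ _)
        _ ≤ ENNReal.ofReal (rexp ε) * ∫⁻ x in A, gaussianPDF μ₁ (σ^2).toNNReal x := by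
            apply mul_le_mul_right
            rw [← gaussianReal_apply _ hVne, ← gaussianReal_apply _ hVne]
            exact measure_mono inter_subset_left
    have hstep3 : gaussianReal μ₀ (σ^2).toNNReal B ≤ ENNReal.ofReal δ := by
      set t : ℝ := σ*ε/|Δ| - |Δ|/(2*σ) with htdef
      have hΔabs : 0 < |Δ| := abs_pos.mpr hΔ
      have htlb : Real.sqrt (2*L) - ε/(2*Real.sqrt (2*L)) ≤ t := by
        set s := Real.sqrt (2*L) with hsdef
        set c := σ*ε/|Δ| with hcdef
        have hc0 : 0 < c := by positivity
        have hc : s ≤ c := by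
          rw [hcdef, le_div_iff₀ hΔabs, hσ,
            show S / ε * s * ε = S * s by field_simp]
          nlinarith
        have hct : t = c - ε/(2*c) := by
          have h1 : ε/(2*c) = |Δ|/(2*σ) := by
            rw [hcdef]
            field_simp [hΔabs.ne', hσ0.ne', hε0.ne']
          rw [htdef, h1]
        have heq : c - ε/(2*c) - (s - ε/(2*s)) = (c - s) * (2*s*c + ε)/(2*s*c) := by
          field_simp
          ring
        have hnn : 0 ≤ (c - s) * (2*s*c + ε)/(2*s*c) :=
          div_nonneg (mul_nonneg (by linarith) (by positivity)) (by positivity)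
        rw [hct]
        linarith
      have hmul : Δ*μ₁ = Δ*μ₀ - Δ^2 := by rw [hΔdef]; ring
      have hkey : 2*(σ*t)*|Δ| = 2*σ^2*ε - Δ^2 := by
        rw [htdef, ← sq_abs Δ]
        field_simp [hΔabs.ne', hσ0.ne']
      clear_value B t Δ L
      clear hstep1 hstep2 hμ hσ hV hVne hA hδ1 hS hΔ0 hLdef hΔdef
      rcases lt_or_gt_of_ne hΔ with hneg | hpos
      · have habs : |Δ| = -Δ := abs_of_neg hneg
        have hkey2 : 2*(σ*t)*(-Δ) = 2*σ^2*ε - Δ^2 := by rw [habs] at hkey; exact hkey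
        have hBeq : B = Iio (μ₀ - σ*t) := by
          ext x
          simp only [hBdef, mem_setOf_eq, mem_Iio]
          constructor
          · intro h
            by_contra hcon
            push_neg at hcon
            have hp : 0 ≤ (x - (μ₀ - σ*t)) * (-Δ) :=
              mul_nonneg (by linarith) (by linarith)
            nlinarith [hp, hkey2, hmul]
          · intro h
            have hp : 0 < (μ₀ - σ*t - x) * (-Δ) :=
              mul_pos (by linarith) (by linarith)
            nlinarith [hp, hkey2, hmul]
        rw [hBeq, gauss_Iio_eq σ hσ0, show -(μ₀ - σ*t) = -μ₀ + σ*t by ring]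
        exact tail_main ε δ L σ (-μ₀) t hε0 hε1 hδ0 hL05 hexpL hσ0 htlb
      · have habs : |Δ| = Δ := abs_of_pos hpos
        have hkey2 : 2*(σ*t)*Δ = 2*σ^2*ε - Δ^2 := by rw [habs] at hkey; exact hkey
        have hBeq : B = Ioi (μ₀ + σ*t) := by
          ext x
          simp only [hBdef, mem_setOf_eq, mem_Ioi]
          constructor
          · intro h
            by_contra hcon
            push_neg at hcon
            have hp : 0 ≤ (μ₀ + σ*t - x) * Δ := mul_nonneg (by linarith) hpos.le
            nlinarith [hp, hkey2, hmul]
          · intro h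
            have hp : 0 < (x - (μ₀ + σ*t)) * Δ := mul_pos (by linarith) hpos
            nlinarith [hp, hkey2, hmul]
        rw [hBeq]
        exact tail_main ε δ L σ μ₀ t hε0 hε1 hδ0 hL05 hexpL hσ0 htlb
    calc gaussianReal μ₀ (σ^2).toNNReal A
        ≤ gaussianReal μ₀ (σ^2).toNNReal (A ∩ Bᶜ) + gaussianReal μ₀ (σ^2).toNNReal B := hstep1
      _ ≤ ENNReal.ofReal (rexp ε) * gaussianReal μ₁ (σ^2).toNNReal A + ENNReal.ofReal δ :=
          add_le_add hstep2 hstep3
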